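/- (§5.4) If a·b₁ = a·b₂ in 𝒜, then ℓ(b₁) = ℓ(b₂) in ℤ[q]. -/

import Mathlib

/-- The smallest congruence on the free magma on one generator containing
all instances of the medial law `(w⊕x)⊕(y⊕z) = (w⊕y)⊕(x⊕z)`. -/
inductive MedialRel : FreeMagma PUnit → FreeMagma PUnit → Prop
  | medial (w x y z : FreeMagma PUnit) :
      MedialRel ((w * x) * (y * z)) ((w * y) * (x * z))
  | refl (a : FreeMagma PUnit) : MedialRel a a
  | symm {a b : FreeMagma PUnit} : MedialRel a b → MedialRel b a
  | trans {a b c : FreeMagma PUnit} : MedialRel a b → MedialRel b c → MedialRel a c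
  | mul {a b c d : FreeMagma PUnit} :
      MedialRel a b → MedialRel c d → MedialRel (a * c) (b * d)

/-- The noncommutative natural numbers `𝒜 := M/∼`. -/
def NCN : Type := Quot MedialRel

/-- The induced binary operation `⊕` on `𝒜`. -/
def NCN.oplus : NCN → NCN → NCN :=
  Quot.map₂ (· * ·) (fun a _ _ h => MedialRel.mul (MedialRel.refl a) h)
    (fun _ _ b h => MedialRel.mul h (MedialRel.refl b))

/-- The class of the generator `1` in `𝒜`. -/
def NCN.one : NCN := Quot.mk _ (FreeMagma.of PUnit.unit)

/-- Substitution multiplication on `M`: `a · b` is the image of `a` under the unique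
magma homomorphism `M → M` sending the generator to `b`. -/
def FreeMagma.subMul (a b : FreeMagma PUnit) : FreeMagma PUnit :=
  (FreeMagma.lift fun _ => b) a

theorem MedialRel.subMul_left {a a' : FreeMagma PUnit} (b : FreeMagma PUnit)
    (h : MedialRel a a') : MedialRel (a.subMul b) (a'.subMul b) := by
  induction h with
  | medial w x y z =>
      simp only [FreeMagma.subMul, map_mul]
      exact MedialRel.medial _ _ _ _
  | refl a => exact MedialRel.refl _
  | symm _ ih => exact MedialRel.symm ih
  | trans _ _ ih1 ih2 => exact MedialRel.trans ih1 ih2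
  | mul _ _ ih1 ih2 =>
      simp only [FreeMagma.subMul, map_mul] at *
      exact MedialRel.mul ih1 ih2

theorem MedialRel.subMul_right (a : FreeMagma PUnit) {b b' : FreeMagma PUnit}
    (h : MedialRel b b') : MedialRel (a.subMul b) (a.subMul b') := by
  induction a with
  | ih1 u => simpa [FreeMagma.subMul] using h
  | ih2 x y ihx ihy =>
      simp only [FreeMagma.subMul, map_mul] at *
      exact MedialRel.mul ihx ihy

/-- The induced multiplication on `𝒜`. -/
def NCN.mul : NCN → NCN → NCN :=
  Quot.map₂ FreeMagma.subMul (fun a _ _ h => MedialRel.subMul_right a h)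
    (fun _ _ b h => MedialRel.subMul_left b h)


/-!
Substituting `b` for every leaf of `a` multiplies the length polynomial by that of `b`, so
`ℓ(a·b) = ℓ(a) ℓ(b)`. Evaluated at `q = 1`, `ℓ(a)` counts the leaves of `a`, so `ℓ(a) ≠ 0`,
and `ℓ(b)` can be cancelled from `ℓ(a) ℓ(b₁) = ℓ(a) ℓ(b₂)` in the domain `ℤ[q]`.
-/

theorem FreeMagma.subMul_of (u : PUnit) (b : FreeMagma PUnit) : (FreeMagma.of u).subMul b = b :=
  rfl

theorem FreeMagma.subMul_mul (x y b : FreeMagma PUnit) :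
    (x * y).subMul b = x.subMul b * y.subMul b :=
  map_mul _ x y

namespace NCN

def mk (x : FreeMagma PUnit) : NCN :=
  Quot.mk _ x

@[elab_as_elim]
theorem ind {p : NCN → Prop} (mk : ∀ x, p (NCN.mk x)) (a : NCN) : p a :=
  Quot.ind mk a

theorem mk_of (u : PUnit) : mk (FreeMagma.of u) = one :=
  rfl

theorem oplus_mk (x y : FreeMagma PUnit) : oplus (mk x) (mk y) = mk (x * y) :=
  rfl

theorem mul_mk (x y : FreeMagma PUnit) : NCN.mul (mk x) (mk y) = mk (x.subMul y) :=
  rfl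

theorem ell_mul {R : Type*} [CommSemiring R] (q : R) (ell : NCN → R) (hone : ell one = 1)
    (hoplus : ∀ a b : NCN, ell (oplus a b) = ell a + q * ell b) (a b : NCN) :
    ell (a.mul b) = ell a * ell b := by
  induction a using NCN.ind with | mk x => ?_
  induction b using NCN.ind with | mk y => ?_
  induction x with
  | ih1 u => rw [mul_mk, FreeMagma.subMul_of, mk_of, hone, one_mul]
  | ih2 x₁ x₂ ih₁ ih₂ =>
    rw [mul_mk] at ih₁ ih₂
    rw [mul_mk, FreeMagma.subMul_mul, ← oplus_mk, ← oplus_mk, hoplus, hoplus, ih₁, ih₂]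
    ring

theorem ell_pos {R : Type*} [Semiring R] [PartialOrder R] [IsStrictOrderedRing R] {q : R}
    (hq : 0 ≤ q) (ell : NCN → R) (hone : ell one = 1)
    (hoplus : ∀ a b : NCN, ell (oplus a b) = ell a + q * ell b) (a : NCN) :
    0 < ell a := by
  induction a using NCN.ind with | mk x => ?_
  induction x with
  | ih1 u => rw [mk_of, hone]; exact one_pos
  | ih2 x₁ x₂ ih₁ ih₂ =>
    rw [← oplus_mk, hoplus]
    exact add_pos_of_pos_of_nonneg ih₁ (mul_nonneg hq ih₂.le)

theorem ell_ne_zero {R : Type*} [CommSemiring R] [PartialOrder R] [IsStrictOrderedRing R]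
    (ell : NCN → Polynomial R) (hone : ell one = 1)
    (hoplus : ∀ a b : NCN, ell (oplus a b) = ell a + Polynomial.X * ell b) (a : NCN) :
    ell a ≠ 0 := by
  have hpos := ell_pos zero_le_one (fun a => (ell a).eval 1) (by simp [hone])
    (fun a b => by simp [hoplus]) a
  intro h
  simp [h] at hpos

end NCN

/-- §5.4: if `a·b₁ = a·b₂` in `𝒜` then `ℓ(b₁) = ℓ(b₂)` in `ℤ[q]`. -/
theorem ncn_ell_eq_of_mul_eq (ell : NCN → Polynomial ℤ)
    (hone : ell NCN.one = 1)
    (hoplus : ∀ a b : NCN, ell (NCN.oplus a b) = ell a + Polynomial.X * ell b) (a b1 b2 : NCN)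
    (h : NCN.mul a b1 = NCN.mul a b2) : ell b1 = ell b2 := by
  have hmul := NCN.ell_mul Polynomial.X ell hone hoplus
  refine mul_left_cancel₀ (NCN.ell_ne_zero ell hone hoplus a) ?_
  rw [← hmul, ← hmul, h]
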